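/- arXiv:2002.04060 — 2 statements merged into one kernel-verified Lean document; each statement's English description precedes it below -/
import Mathlib

section
/- For every d ≥ 1 and m ≥ 1, every measurable indicator function f = (f_1, …, f_m) on I_d (each component f_i is then in L¹(I_d)), and every ε > 0, there exist an integer n ≥ 1, shared hidden-layer weights w_1, …, w_n ∈ ℝ^d, biases b_1, …, b_n ∈ ℝ, and output weights α_{ij} ∈ ℝ such that the multi-output ReLU network g_i(x) = Σ_{j=1}^n α_{ij} · ReLU(w_jᵀ x + b_j) satisfies, for every i = 1, …, m, ∫_{I_d} |softmax(g(x))_i − f_i(x)| dx < ε, where g(x) = (g_1(x), …, g_m(x)). That is, a sufficiently large single-hidden-layer ReLU network with a softmax output layer can approximate any measurable indicator function in the L¹ norm. -/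
/-!
Shallow ReLU networks are uniformly dense in `C(K, ℝ)` for compact `K ⊆ ℝ^d`: interpolation by
hat functions `ReLU (s + 1) - 2 ReLU s + ReLU (s - 1)` puts every ridge function `x ↦ φ (w ⬝ᵥ x)`
into the closure of their span, and the exponential ridges `x ↦ exp (w ⬝ᵥ x)` span a
point-separating subalgebra, so Stone–Weierstrass applies.

By inner regularity the cube is covered, up to small measure, by disjoint compact sets
`F i ⊆ {f i = 1}`. Network approximations of Urysohn functions for these sets give outputs `g`
with `g j + c ≤ g i` on `F i` for every `j ≠ i`, so on `⋃ i, F i` the softmax of `g` is within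
`m e^{-c}` of `f`; on the rest of the cube the error is at most `1`.
-/

open MeasureTheory

/-- ReLU activation: `ReLU t = max t 0`. -/
noncomputable def ReLU (t : ℝ) : ℝ := max t 0

/-- Softmax of a vector `y ∈ ℝ^m`: `softmax y i = exp (y i) / ∑ k, exp (y k)`. -/
noncomputable def softmax {m : ℕ} (y : Fin m → ℝ) (i : Fin m) : ℝ :=
  Real.exp (y i) / ∑ k, Real.exp (y k)

/-- `f = (f_1, …, f_m)` is an indicator function on `I_d = [0,1]^d` if each component takes
values in `{0, 1}` and the components sum to `1` at every point of `I_d`. -/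
def IsIndicatorFunction {d m : ℕ} (f : Fin m → (Fin d → ℝ) → ℝ) : Prop :=
  ∀ x ∈ Set.Icc (0 : Fin d → ℝ) 1,
    (∀ i, f i x = 0 ∨ f i x = 1) ∧ (∑ i, f i x) = 1

open Function
open scoped ENNReal

noncomputable def reluRamp (s : ℝ) : ℝ := ReLU s - ReLU (s - 1)

-- The integer translates `s ↦ reluHat (s - j)` form a partition of unity.
noncomputable def reluHat (s : ℝ) : ℝ := reluRamp (s + 1) - reluRamp s

lemma reluRamp_eq_max_min (s : ℝ) : reluRamp s = max (min s 1) 0 := by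
  simp only [reluRamp, ReLU]
  grind

lemma reluRamp_mono : Monotone reluRamp := fun s t hst => by
  simp only [reluRamp_eq_max_min]
  gcongr

lemma reluHat_nonneg (s : ℝ) : 0 ≤ reluHat s :=
  sub_nonneg.2 (reluRamp_mono (by linarith))

lemma reluHat_eq_zero_of_one_le_abs {s : ℝ} (hs : 1 ≤ |s|) : reluHat s = 0 := by
  simp only [reluHat, reluRamp_eq_max_min]
  grind

lemma sum_reluHat_sub_natCast {u : ℝ} {N : ℕ} (hu : u ∈ Set.Icc (0 : ℝ) N) :
    ∑ j ∈ Finset.range (N + 1), reluHat (u - j) = 1 := by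
  have := Finset.sum_range_sub' (fun j : ℕ => reluRamp (u - j + 1)) (N + 1)
  simp only [reluHat]
  convert this using 1
  · push_cast; ring_nf
  · simp only [reluRamp_eq_max_min]
    push_cast
    grind

lemma abs_sum_mul_reluHat_sub_le (ψ : ℝ → ℝ) {u ω : ℝ} {N : ℕ} (hu : u ∈ Set.Icc (0 : ℝ) N)
    (hψ : ∀ j : ℕ, |u - j| < 1 → |ψ j - ψ u| ≤ ω) :
    |∑ j ∈ Finset.range (N + 1), ψ j * reluHat (u - j) - ψ u| ≤ ω := by
  calc |∑ j ∈ Finset.range (N + 1), ψ j * reluHat (u - j) - ψ u|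
      = |∑ j ∈ Finset.range (N + 1), (ψ j - ψ u) * reluHat (u - j)| := by
        simp only [sub_mul, Finset.sum_sub_distrib, ← Finset.mul_sum, sum_reluHat_sub_natCast hu,
          mul_one]
    _ ≤ ∑ j ∈ Finset.range (N + 1), |ψ j - ψ u| * reluHat (u - j) := by
        refine (Finset.abs_sum_le_sum_abs _ _).trans_eq (Finset.sum_congr rfl fun j _ => ?_)
        rw [abs_mul, abs_of_nonneg (reluHat_nonneg _)]
    _ ≤ ∑ j ∈ Finset.range (N + 1), ω * reluHat (u - j) := by
        refine Finset.sum_le_sum fun j _ => ?_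
        rcases lt_or_ge |u - j| 1 with h | h
        · exact mul_le_mul_of_nonneg_right (hψ j h) (reluHat_nonneg _)
        · simp [reluHat_eq_zero_of_one_le_abs h]
    _ = ω := by rw [← Finset.mul_sum, sum_reluHat_sub_natCast hu, mul_one]

lemma exists_reluHat_interpolation (φ : ℝ → ℝ) (hφ : Continuous φ) (A B : ℝ) {ε : ℝ}
    (hε : 0 < ε) : ∃ h > 0, ∃ N : ℕ, ∀ t ∈ Set.Icc A B,
      |∑ j ∈ Finset.range (N + 1), φ (A + j * h) * reluHat ((t - A) / h - j) - φ t| ≤ ε := by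
  obtain ⟨δ, hδ, hφδ⟩ := Metric.uniformContinuousOn_iff.1
    ((isCompact_Icc (a := A - 1) (b := B + 1)).uniformContinuousOn_of_continuous
      hφ.continuousOn) ε hε
  set h := min δ 1
  have hh : 0 < h := lt_min hδ one_pos
  refine ⟨h, hh, ⌈(B - A) / h⌉₊, fun t ht => ?_⟩
  have hu : (t - A) / h ∈ Set.Icc (0 : ℝ) ⌈(B - A) / h⌉₊ :=
    ⟨div_nonneg (by linarith [ht.1]) hh.le,
      (div_le_div_of_nonneg_right (by linarith [ht.2]) hh.le).trans (Nat.le_ceil _)⟩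
  have htu : A + (t - A) / h * h = t := by field_simp; ring
  convert abs_sum_mul_reluHat_sub_le (fun s => φ (A + s * h)) hu fun j hj => ?_ using 3
  · rw [htu]
  · have hjt : |A + j * h - t| < h := by
      have : A + j * h - t = -(((t - A) / h - j) * h) := by field_simp; ring
      rw [this, abs_neg, abs_mul, abs_of_pos hh]
      exact mul_lt_of_lt_one_left hh hj
    have hh1 : h ≤ 1 := min_le_right _ _
    rw [htu]
    refine (hφδ _ ?_ _ ?_ (hjt.trans_le (min_le_left _ _))).le <;>
      constructor <;> linarith [abs_lt.1 hjt, ht.1, ht.2]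

section ReluSpan

variable {d : ℕ} (K : Set (Fin d → ℝ))

noncomputable def reluRidge (p : (Fin d → ℝ) × ℝ) : C(K, ℝ) :=
  ⟨fun x => ReLU (p.1 ⬝ᵥ x + p.2), by unfold ReLU; fun_prop⟩

noncomputable def reluSpan : Submodule ℝ C(K, ℝ) :=
  Submodule.span ℝ (Set.range (reluRidge K))

lemma exists_mem_reluSpan_eq_reluHat (w : Fin d → ℝ) (b : ℝ) :
    ∃ g ∈ reluSpan K, ∀ x, g x = reluHat (w ⬝ᵥ x + b) := by
  have hmem : ∀ c, reluRidge K (w, c) ∈ reluSpan K := fun c => Submodule.subset_span ⟨_, rfl⟩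
  refine ⟨reluRidge K (w, b + 1) - 2 • reluRidge K (w, b) + reluRidge K (w, b - 1),
    add_mem (sub_mem (hmem _) (Submodule.smul_of_tower_mem _ 2 (hmem _))) (hmem _), fun x => ?_⟩
  simp only [reluHat, reluRamp, reluRidge, ContinuousMap.add_apply, ContinuousMap.sub_apply,
    ContinuousMap.smul_apply, ContinuousMap.coe_mk]
  ring_nf

lemma exists_mem_reluSpan_eq_sum_reluHat {ι : Type*} (s : Finset ι) (c : ι → ℝ)
    (w : ι → Fin d → ℝ) (b : ι → ℝ) :
    ∃ g ∈ reluSpan K, ∀ x, g x = ∑ j ∈ s, c j * reluHat (w j ⬝ᵥ x + b j) := by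
  choose g hg hgx using fun j => exists_mem_reluSpan_eq_reluHat K (w j) (b j)
  refine ⟨∑ j ∈ s, c j • g j, Submodule.sum_mem _ fun j _ => Submodule.smul_mem _ _ (hg j),
    fun x => ?_⟩
  simp [hgx]

lemma exists_mem_reluSpan_near_ridge [CompactSpace K] (φ : ℝ → ℝ) (hφ : Continuous φ)
    (w : Fin d → ℝ) {ε : ℝ} (hε : 0 < ε) :
    ∃ g ∈ reluSpan K, ∀ x : K, |g x - φ (w ⬝ᵥ x)| ≤ ε := by
  have hcompact := isCompact_range (f := fun x : K => w ⬝ᵥ (x : Fin d → ℝ)) (by fun_prop)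
  obtain ⟨A, hA⟩ := hcompact.bddBelow
  obtain ⟨B, hB⟩ := hcompact.bddAbove
  obtain ⟨h, hh, N, hN⟩ := exists_reluHat_interpolation φ hφ A B hε
  obtain ⟨g, hg, hgx⟩ := exists_mem_reluSpan_eq_sum_reluHat K (Finset.range (N + 1))
    (fun j => φ (A + j * h)) (fun _ => h⁻¹ • w) (fun j => -A / h - j)
  refine ⟨g, hg, fun x => ?_⟩
  rw [hgx]
  convert hN _ ⟨hA ⟨x, rfl⟩, hB ⟨x, rfl⟩⟩ using 6 with j
  rw [smul_dotProduct, smul_eq_mul]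
  ring

end ReluSpan

section ExpRidge

variable {d : ℕ} (K : Set (Fin d → ℝ))

noncomputable def expRidge (w : Fin d → ℝ) : C(K, ℝ) := ⟨fun x => Real.exp (w ⬝ᵥ x), by fun_prop⟩

noncomputable def expRidgeSubmonoid : Submonoid C(K, ℝ) where
  carrier := Set.range (expRidge K)
  mul_mem' := by
    rintro _ _ ⟨v, rfl⟩ ⟨w, rfl⟩
    exact ⟨v + w, by ext x; simp [expRidge, add_dotProduct, Real.exp_add]⟩
  one_mem' := ⟨0, by ext x; simp [expRidge]⟩

variable [CompactSpace K]

lemma expRidge_mem_closure_reluSpan (w : Fin d → ℝ) :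
    expRidge K w ∈ closure (reluSpan K : Set C(K, ℝ)) := by
  refine Metric.mem_closure_iff.2 fun ε hε => ?_
  obtain ⟨g, hg, hgx⟩ :=
    exists_mem_reluSpan_near_ridge K Real.exp Real.continuous_exp w (half_pos hε)
  refine ⟨g, hg, ((ContinuousMap.dist_le (half_pos hε).le).2 fun x => ?_).trans_lt
    (half_lt_self hε)⟩
  rw [dist_comm]
  exact hgx x

theorem dense_reluSpan : Dense (reluSpan K : Set C(K, ℝ)) := by
  set A := Algebra.adjoin ℝ (expRidgeSubmonoid K : Set C(K, ℝ))
  have hsep : A.SeparatesPoints := by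
    intro x y hxy
    obtain ⟨k, hk⟩ := Function.ne_iff.1 (Subtype.coe_injective.ne hxy)
    refine ⟨_, ⟨expRidge K (Pi.single k 1), Algebra.subset_adjoin ⟨_, rfl⟩, rfl⟩, ?_⟩
    simpa [expRidge, single_dotProduct] using hk
  have hAdense : Dense (A : Set C(K, ℝ)) := by
    rw [dense_iff_closure_eq, ← Subalgebra.topologicalClosure_coe,
      ContinuousMap.subalgebra_topologicalClosure_eq_top_of_separatesPoints A hsep,
      Algebra.coe_top]
  have hA : Subalgebra.toSubmodule A ≤ (reluSpan K).topologicalClosure := by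
    rw [Algebra.adjoin_eq_span, Submonoid.closure_eq, Submodule.span_le]
    rintro _ ⟨w, rfl⟩
    exact expRidge_mem_closure_reluSpan K w
  exact dense_closure.1 (hAdense.mono hA)

end ExpRidge

theorem Submodule.exists_fin_sum_smul_of_forall_mem_span_range {ι κ R M : Type*} [Nonempty ι]
    [Fintype κ] [Semiring R] [AddCommMonoid M] [Module R M] {v : ι → M} {s : κ → M}
    (hs : ∀ k, s k ∈ Submodule.span R (Set.range v)) :
    ∃ n, 1 ≤ n ∧ ∃ (p : Fin n → ι) (α : κ → Fin n → R), ∀ k, s k = ∑ j, α k j • v (p j) := by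
  classical
  choose c hc using fun k => Finsupp.mem_span_range_iff_exists_finsupp.1 (hs k)
  set S := insert (Classical.arbitrary ι) (Finset.univ.biUnion fun k => (c k).support)
  refine ⟨S.card, Finset.card_pos.2 (Finset.insert_nonempty _ _), fun j => S.equivFin.symm j,
    fun k j => c k (S.equivFin.symm j), fun k => ?_⟩
  have hsub : (c k).support ⊆ S :=
    (Finset.subset_biUnion_of_mem (fun k => (c k).support) (Finset.mem_univ k)).trans
      (Finset.subset_insert _ _)
  rw [← hc k, Finsupp.sum_of_support_subset _ hsub (fun i a => a • v i) fun _ _ => zero_smul _ _,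
    ← Finset.sum_coe_sort, ← S.equivFin.symm.sum_comp]

noncomputable def reluNetwork {d n m : ℕ} (w : Fin n → Fin d → ℝ) (b : Fin n → ℝ)
    (α : Fin m → Fin n → ℝ) (x : Fin d → ℝ) (i : Fin m) : ℝ :=
  ∑ j, α i j * ReLU (w j ⬝ᵥ x + b j)

lemma exists_reluNetwork_eq_of_mem_reluSpan {d m : ℕ} {K : Set (Fin d → ℝ)}
    {g : Fin m → C(K, ℝ)} (hg : ∀ i, g i ∈ reluSpan K) :
    ∃ n, 1 ≤ n ∧ ∃ (w : Fin n → Fin d → ℝ) (b : Fin n → ℝ) (α : Fin m → Fin n → ℝ),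
      ∀ i (x : K), g i x = reluNetwork w b α x i := by
  obtain ⟨n, hn, p, α, hα⟩ := Submodule.exists_fin_sum_smul_of_forall_mem_span_range hg
  refine ⟨n, hn, fun j => (p j).1, fun j => (p j).2, α, fun i x => ?_⟩
  simp [hα i, reluNetwork, reluRidge]

theorem exists_continuous_eqOn_one_eqOn_zero_of_pairwise_disjoint {X ι : Type*}
    [TopologicalSpace X] [NormalSpace X] [Finite ι] {F : ι → Set X}
    (hF : ∀ i, IsClosed (F i)) (hdisj : Pairwise (Disjoint on F)) :
    ∃ ψ : ι → C(X, ℝ), ∀ i, Set.EqOn (ψ i) 1 (F i) ∧ ∀ j ≠ i, Set.EqOn (ψ i) 0 (F j) := by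
  choose ψ hψ0 hψ1 _ using fun i => exists_continuous_zero_one_of_isClosed
    ((Set.toFinite ({i}ᶜ : Set ι)).isClosed_biUnion fun j _ => hF j) (hF i)
    (Set.disjoint_iUnion₂_left.2 fun j hj => hdisj hj)
  exact ⟨ψ, fun i => ⟨hψ1 i, fun j hj => (hψ0 i).mono (Set.subset_biUnion_of_mem hj)⟩⟩

theorem exists_reluSpan_gap_of_pairwise_disjoint {d : ℕ} {K : Set (Fin d → ℝ)} [CompactSpace K]
    {ι : Type*} [Finite ι] {F : ι → Set K} (hF : ∀ i, IsClosed (F i))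
    (hdisj : Pairwise (Disjoint on F)) {c : ℝ} (hc : 0 < c) :
    ∃ g : ι → C(K, ℝ), (∀ i, g i ∈ reluSpan K) ∧ ∀ i, ∀ x ∈ F i, ∀ j ≠ i, g j x + c ≤ g i x := by
  obtain ⟨ψ, hψ⟩ := exists_continuous_eqOn_one_eqOn_zero_of_pairwise_disjoint hF hdisj
  choose g hg hgψ using fun i =>
    (dense_reluSpan K).exists_dist_lt ((2 * c) • ψ i) (half_pos hc)
  refine ⟨g, hg, fun i x hx j hji => ?_⟩
  have hclose : ∀ k, |g k x - 2 * c * ψ k x| < c / 2 := fun k => by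
    have := (ContinuousMap.dist_apply_le_dist x).trans_lt (hgψ k)
    rwa [dist_comm, Real.dist_eq] at this
  have hi := hclose i
  have hj := hclose j
  rw [(hψ i).1 hx] at hi
  rw [(hψ j).2 i hji.symm hx] at hj
  simp only [Pi.one_apply, Pi.zero_apply, mul_one, mul_zero, sub_zero] at hi hj
  linarith [abs_lt.1 hi, abs_lt.1 hj]

section Softmax

variable {m : ℕ} (y : Fin m → ℝ)

lemma softmax_nonneg (i : Fin m) : 0 ≤ softmax y i :=
  div_nonneg (Real.exp_pos _).le (Finset.sum_nonneg fun _ _ => (Real.exp_pos _).le)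

lemma sum_softmax [NeZero m] : ∑ i, softmax y i = 1 := by
  simp only [softmax]
  rw [← Finset.sum_div, div_self]
  exact (Finset.sum_pos (fun _ _ => Real.exp_pos _) Finset.univ_nonempty).ne'

lemma softmax_le_exp_neg {i j : Fin m} {c : ℝ} (h : y j + c ≤ y i) :
    softmax y j ≤ Real.exp (-c) :=
  calc softmax y j ≤ Real.exp (y j) / Real.exp (y i) :=
        div_le_div_of_nonneg_left (Real.exp_pos _).le (Real.exp_pos _)
          (Finset.single_le_sum (fun k _ => (Real.exp_pos (y k)).le) (Finset.mem_univ i))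
    _ ≤ Real.exp (-c) := by rw [← Real.exp_sub]; exact Real.exp_le_exp.2 (by linarith)

lemma softmax_le_one (i : Fin m) : softmax y i ≤ 1 := by
  simpa using softmax_le_exp_neg y (le_of_eq (add_zero (y i)))

lemma abs_softmax_sub_ite_le {i : Fin m} {c : ℝ} (h : ∀ j ≠ i, y j + c ≤ y i) (j : Fin m) :
    |softmax y j - if j = i then 1 else 0| ≤ m * Real.exp (-c) := by
  have : NeZero m := ⟨i.pos.ne'⟩
  split_ifs with hji
  · subst hji
    rw [abs_sub_comm, abs_of_nonneg (sub_nonneg.2 (softmax_le_one y j))]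
    calc 1 - softmax y j = ∑ k ∈ Finset.univ.erase j, softmax y k := by
          rw [← sum_softmax y, ← Finset.add_sum_erase _ _ (Finset.mem_univ j), add_sub_cancel_left]
      _ ≤ ∑ k ∈ Finset.univ.erase j, Real.exp (-c) :=
          Finset.sum_le_sum fun k hk => softmax_le_exp_neg y (h k (Finset.ne_of_mem_erase hk))
      _ ≤ m * Real.exp (-c) := by
          rw [Finset.sum_const, nsmul_eq_mul]
          gcongr
          exact_mod_cast (Finset.card_erase_le).trans (Finset.card_fin m).le
  · rw [sub_zero, abs_of_nonneg (softmax_nonneg y j)]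
    exact (softmax_le_exp_neg y (h j hji)).trans
      (le_mul_of_one_le_left (Real.exp_pos _).le (by exact_mod_cast i.pos))

end Softmax

theorem exists_isCompact_subsets_measure_iUnion_diff_le {X ι : Type*} [TopologicalSpace X]
    [MeasurableSpace X] [OpensMeasurableSpace X] [T2Space X] {μ : Measure X}
    [μ.InnerRegularCompactLTTop] [Finite ι] {A : ι → Set X} (hA : ∀ i, MeasurableSet (A i))
    (hμA : ∀ i, μ (A i) ≠ ∞) {δ : ℝ≥0∞} (hδ : δ ≠ 0) :
    ∃ F : ι → Set X, (∀ i, F i ⊆ A i ∧ IsCompact (F i)) ∧ μ ((⋃ i, A i) \ ⋃ i, F i) ≤ δ := by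
  have := Fintype.ofFinite ι
  choose F hFA hFc hF using fun i => (hA i).exists_isCompact_sdiff_lt (hμA i)
    (ENNReal.div_ne_zero.2 ⟨hδ, ENNReal.natCast_ne_top (Fintype.card ι)⟩)
  refine ⟨F, fun i => ⟨hFA i, hFc i⟩, ?_⟩
  have hsub : (⋃ i, A i) \ ⋃ i, F i ⊆ ⋃ i, A i \ F i := by
    rintro x ⟨hxA, hxF⟩
    obtain ⟨i, hi⟩ := Set.mem_iUnion.1 hxA
    exact Set.mem_iUnion.2 ⟨i, hi, fun h => hxF (Set.mem_iUnion.2 ⟨i, h⟩)⟩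
  calc μ ((⋃ i, A i) \ ⋃ i, F i) ≤ ∑ i, μ (A i \ F i) :=
        (measure_mono hsub).trans (measure_iUnion_fintype_le μ _)
    _ ≤ ∑ _i : ι, δ / Fintype.card ι := Finset.sum_le_sum fun i _ => (hF i).le
    _ ≤ δ := by rw [Finset.sum_const, nsmul_eq_mul, Finset.card_univ]; exact ENNReal.mul_div_le

theorem setIntegral_le_mul_measureReal_add_measureReal_diff {X : Type*} [MeasurableSpace X]
    {μ : Measure X} {K G : Set X} (hK : MeasurableSet K) (hμK : μ K ≠ ∞) (hG : MeasurableSet G)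
    {p : X → ℝ} {η : ℝ} (hη : 0 ≤ η) (hp0 : ∀ x ∈ K, 0 ≤ p x) (hp1 : ∀ x ∈ K, p x ≤ 1)
    (hpG : ∀ x ∈ K ∩ G, p x ≤ η) :
    ∫ x in K, p x ∂μ ≤ η * μ.real K + μ.real (K \ G) := by
  have : IsFiniteMeasure (μ.restrict K) := isFiniteMeasure_restrict.2 hμK
  have hind : Integrable (Gᶜ.indicator (1 : X → ℝ)) (μ.restrict K) :=
    (integrable_const 1).indicator hG.compl
  calc ∫ x in K, p x ∂μ ≤ ∫ x in K, (η + Gᶜ.indicator 1 x) ∂μ := by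
        refine integral_mono_of_nonneg (ae_restrict_of_forall_mem hK hp0)
          ((integrable_const η).add hind)
          (ae_restrict_of_forall_mem hK fun x hx => ?_)
        by_cases hxG : x ∈ G
        · simpa [hxG] using hpG x ⟨hx, hxG⟩
        · simpa [hxG] using (hp1 x hx).trans (le_add_of_nonneg_left hη)
    _ = η * μ.real K + μ.real (K \ G) := by
        rw [integral_add (integrable_const η) hind,
          integral_indicator_one hG.compl, measureReal_restrict_apply hG.compl,
          Set.sdiff_eq, Set.inter_comm]
        simp [mul_comm]

namespace IsIndicatorFunction

variable {d m : ℕ} {f : Fin m → (Fin d → ℝ) → ℝ} {x : Fin d → ℝ}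

lemma apply_eq_ite (hf : IsIndicatorFunction f) (hx : x ∈ Set.Icc 0 1) {i : Fin m}
    (hi : f i x = 1) (j : Fin m) : f j x = if j = i then 1 else 0 := by
  split_ifs with hji
  · rwa [hji]
  · refine ((hf x hx).1 j).resolve_right fun hj => ?_
    have := Finset.sum_le_sum_of_subset_of_nonneg (Finset.subset_univ {i, j})
      fun k _ _ => ((hf x hx).1 k).elim (fun h => h.ge) fun h => h ▸ zero_le_one
    rw [Finset.sum_pair (Ne.symm hji), hi, hj, (hf x hx).2] at this
    norm_num at this

lemma exists_eq_one (hf : IsIndicatorFunction f) (hx : x ∈ Set.Icc 0 1) : ∃ i, f i x = 1 := by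
  by_contra! h
  have := (hf x hx).2
  simp [fun i => ((hf x hx).1 i).resolve_right (h i)] at this

lemma apply_mem_Icc (hf : IsIndicatorFunction f) (hx : x ∈ Set.Icc 0 1) (i : Fin m) :
    f i x ∈ Set.Icc 0 1 := by
  rcases (hf x hx).1 i with h | h <;> simp [h]

lemma exists_isCompact_subsets (hf : IsIndicatorFunction f) (hmeas : ∀ i, Measurable (f i))
    {η : ℝ} (hη : 0 < η) :
    ∃ F : Fin m → Set (Fin d → ℝ), (∀ i, IsCompact (F i)) ∧ Pairwise (Disjoint on F) ∧
      (∀ i, F i ⊆ Set.Icc 0 1 ∩ f i ⁻¹' {1}) ∧ volume.real (Set.Icc 0 1 \ ⋃ i, F i) ≤ η := by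
  set K := Set.Icc (0 : Fin d → ℝ) 1
  have hU : ⋃ i, K ∩ f i ⁻¹' {1} = K := by
    refine subset_antisymm (Set.iUnion_subset fun i => Set.inter_subset_left) fun x hx => ?_
    obtain ⟨i, hi⟩ := hf.exists_eq_one hx
    exact Set.mem_iUnion.2 ⟨i, hx, hi⟩
  obtain ⟨F, hF, hvol⟩ := exists_isCompact_subsets_measure_iUnion_diff_le
    (fun i => measurableSet_Icc.inter (hmeas i (measurableSet_singleton 1)))
    (fun i => measure_ne_top_of_subset Set.inter_subset_left
      (isCompact_Icc.measure_lt_top (μ := volume)).ne)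
    (ENNReal.ofReal_pos.2 hη).ne'
  refine ⟨F, fun i => (hF i).2, fun i j hij => Set.disjoint_left.2 fun x hxi hxj => ?_,
    fun i => (hF i).1, ?_⟩
  · have hi := (hF i).1 hxi
    have hj := (hF j).1 hxj
    have := hf.apply_eq_ite hi.1 hi.2 j
    simp_all
  · rw [hU] at hvol
    exact ENNReal.toReal_le_of_le_ofReal hη.le hvol

lemma integral_abs_softmax_sub_le (hf : IsIndicatorFunction f) {F : Fin m → Set (Fin d → ℝ)}
    (hFmeas : ∀ j, MeasurableSet (F j)) (hFsub : ∀ j, F j ⊆ Set.Icc 0 1 ∩ f j ⁻¹' {1})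
    {y : (Fin d → ℝ) → Fin m → ℝ} {c : ℝ} (hgap : ∀ j, ∀ x ∈ F j, ∀ k ≠ j, y x k + c ≤ y x j)
    (i : Fin m) :
    ∫ x in Set.Icc 0 1, |softmax (y x) i - f i x| ≤
      m * Real.exp (-c) + volume.real (Set.Icc 0 1 \ ⋃ j, F j) := by
  have hbound : ∀ x ∈ Set.Icc 0 1 ∩ ⋃ j, F j,
      |softmax (y x) i - f i x| ≤ m * Real.exp (-c) := by
    rintro x ⟨hx, hxF⟩
    obtain ⟨j, hj⟩ := Set.mem_iUnion.1 hxF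
    rw [hf.apply_eq_ite hx (hFsub j hj).2 i]
    exact abs_softmax_sub_ite_le _ (hgap j x hj) i
  have := setIntegral_le_mul_measureReal_add_measureReal_diff measurableSet_Icc
    (isCompact_Icc.measure_lt_top (μ := volume)).ne (.iUnion hFmeas) (by positivity)
    (fun x _ => abs_nonneg _) (fun x hx => abs_sub_le_of_nonneg_of_le (softmax_nonneg _ i)
      (softmax_le_one _ i) (hf.apply_mem_Icc hx i).1 (hf.apply_mem_Icc hx i).2) hbound
  simpa [measureReal_def] using this

end IsIndicatorFunction

theorem softmax_relu_network_approximates_indicator_general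
    (d m : ℕ)
    (f : Fin m → (Fin d → ℝ) → ℝ)
    (hfmeas : ∀ i, Measurable (f i))
    (hind : IsIndicatorFunction f)
    (ε : ℝ) (hε : 0 < ε) :
    ∃ (n : ℕ), 1 ≤ n ∧ ∃ (w : Fin n → Fin d → ℝ) (b : Fin n → ℝ)
      (α : Fin m → Fin n → ℝ),
      ∀ i, ∫ x in Set.Icc (0 : Fin d → ℝ) 1,
        |softmax (fun i' => ∑ j, α i' j * ReLU (∑ k, w j k * x k + b j)) i - f i x| < ε := by
  obtain ⟨F, hFc, hFdisj, hFsub, hvol⟩ := hind.exists_isCompact_subsets hfmeas (half_pos hε)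
  obtain ⟨c, hc, hcε⟩ : ∃ c > 0, m * Real.exp (-c) < ε / 2 :=
    (((Real.tendsto_exp_neg_atTop_nhds_zero.const_mul (m : ℝ)).eventually
      (gt_mem_nhds (by simpa using half_pos hε))).and (Filter.eventually_gt_atTop 0)).exists.imp
        fun c hc => ⟨hc.2, hc.1⟩
  obtain ⟨g, hg, hgap⟩ := exists_reluSpan_gap_of_pairwise_disjoint
    (K := Set.Icc (0 : Fin d → ℝ) 1) (F := fun i => (↑) ⁻¹' F i)
    (fun i => (hFc i).isClosed.preimage continuous_subtype_val)
    (fun i j hij => (hFdisj hij).preimage _) hc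
  obtain ⟨n, hn, w, b, α, hgα⟩ := exists_reluNetwork_eq_of_mem_reluSpan hg
  refine ⟨n, hn, w, b, α, fun i => ?_⟩
  refine (hind.integral_abs_softmax_sub_le (fun j => (hFc j).isClosed.measurableSet) hFsub
    (y := reluNetwork w b α) (fun j x hx k hk => ?_) i).trans_lt (by linarith)
  simpa only [hgα] using hgap j ⟨x, (hFsub j hx).1⟩ hx k hk

/-- **Approximation capability of softmax.**
For every `d ≥ 1`, `m ≥ 1`, every measurable indicator function `f = (f_1, …, f_m)` on `I_d`,
and every `ε > 0`, there is a single-hidden-layer ReLU network with a softmax output layer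
such that, for every `i`, `∫_{I_d} |softmax (g x) i - f i x| dx < ε`,
where `g x i = ∑ j, α i j * ReLU (⟪w j, x⟫ + b j)`. -/
theorem softmax_relu_network_approximates_indicator
    (d m : ℕ) (hd : 1 ≤ d) (hm : 1 ≤ m)
    (f : Fin m → (Fin d → ℝ) → ℝ)
    (hfmeas : ∀ i, Measurable (f i))
    (hind : IsIndicatorFunction f)
    (ε : ℝ) (hε : 0 < ε) :
    ∃ (n : ℕ), 1 ≤ n ∧ ∃ (w : Fin n → Fin d → ℝ) (b : Fin n → ℝ)
      (α : Fin m → Fin n → ℝ),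
      ∀ i, ∫ x in Set.Icc (0 : Fin d → ℝ) 1,
        |softmax (fun i' => ∑ j, α i' j * ReLU (∑ k, w j k * x k + b j)) i - f i x| < ε :=
  softmax_relu_network_approximates_indicator_general d m f hfmeas hind ε hε
end

section
/- For every dimension d ≥ 1, every function f ∈ L¹(I_d) and every ε > 0, there exist an integer n ≥ 1, coefficients α_1, …, α_n ∈ ℝ, weight vectors w_1, …, w_n ∈ ℝ^d and biases b_1, …, b_n ∈ ℝ such that ∫_{I_d} |Σ_{j=1}^n α_j · σ₁(w_jᵀ x + b_j) − f(x)| dx < ε; that is, finite superpositions of the clipped-linear activation σ₁ are dense in L¹(I_d). -/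
open MeasureTheory

/-- The clipped-linear activation `σ₁ t = ReLU (t + 0.5) - ReLU (t - 0.5)`. -/
noncomputable def sigma1 (t : ℝ) : ℝ := ReLU (t + 0.5) - ReLU (t - 0.5)

/-!
Products of exponential ridge functions `x ↦ exp (w ⬝ x + c)` are again such functions, and they
separate points, so by Stone–Weierstrass their span is uniformly dense in `C(K, ℝ)` for every
compact `K ⊆ ℝᵈ`. Each of them is a continuous function of one variable composed with an affine
form, and on a bounded interval a continuous function is uniformly approximated by its
piecewise-linear interpolant, which is a telescoping sum of shifted and rescaled copies of `σ₁`.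
Hence `σ₁`-networks are uniformly dense in `C(K, ℝ)`; as continuous functions are dense in
`L¹(K)`, so are `σ₁`-networks.
-/

open Set Finset Submodule

lemma sigma1_eq_zero_of_le {t : ℝ} (ht : t ≤ -(1 / 2)) : sigma1 t = 0 := by
  unfold sigma1 ReLU
  rw [max_eq_right (by norm_num; linarith), max_eq_right (by norm_num; linarith), sub_zero]

lemma sigma1_eq_one_of_le {t : ℝ} (ht : 1 / 2 ≤ t) : sigma1 t = 1 := by
  unfold sigma1 ReLU
  rw [max_eq_left (by norm_num; linarith), max_eq_left (by norm_num; linarith)]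
  norm_num

lemma abs_sigma1_le_one (t : ℝ) : |sigma1 t| ≤ 1 := by
  unfold sigma1 ReLU
  rcases max_cases (t + 0.5) 0 with ⟨h₁, h₂⟩ | ⟨h₁, h₂⟩ <;>
    rcases max_cases (t - 0.5) 0 with ⟨h₃, h₄⟩ | ⟨h₃, h₄⟩ <;>
    rw [h₁, h₃, abs_le] <;> norm_num at * <;> constructor <;> linarith

@[fun_prop]
lemma continuous_sigma1 : Continuous sigma1 := by
  unfold sigma1 ReLU
  fun_prop

theorem sum_range_sub_mul_eq_of_eq_one_of_eq_zero {R : Type*} [CommRing R] (y r : ℕ → R)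
    {k N : ℕ} (hk : k < N) (h_one : ∀ i < k, r i = 1) (h_zero : ∀ i, k < i → r i = 0) :
    ∑ i ∈ range N, (y (i + 1) - y i) * r i = y k - y 0 + (y (k + 1) - y k) * r k := by
  rw [← sum_range_add_sum_Ico _ hk,
    sum_eq_zero (s := Ico _ _) fun i hi => by rw [h_zero i (Finset.mem_Ico.1 hi).1, mul_zero],
    add_zero, sum_range_succ, sum_congr rfl fun i hi => by rw [h_one i (mem_range.1 hi), mul_one],
    sum_range_sub]

theorem exists_lt_mem_Icc_of_mem_Icc {τ : ℕ → ℝ} {N : ℕ} (hN : 0 < N) {t : ℝ}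
    (ht : t ∈ Icc (τ 0) (τ N)) : ∃ k < N, t ∈ Icc (τ k) (τ (k + 1)) := by
  classical
  have hex : ∃ k, t ≤ τ (k + 1) := ⟨N - 1, by rw [Nat.sub_add_cancel hN]; exact ht.2⟩
  refine ⟨Nat.find hex, ?_, ?_, Nat.find_spec hex⟩
  · exact (Nat.find_min' hex (by rw [Nat.sub_add_cancel hN]; exact ht.2)).trans_lt (by omega)
  · rcases h : Nat.find hex with _ | j
    · exact ht.1
    · exact (not_le.1 (Nat.find_min hex (show j < Nat.find hex by omega))).le

def sigma1Span : Submodule ℝ (ℝ → ℝ) :=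
  span ℝ (range fun p : ℝ × ℝ => fun t => sigma1 (p.1 * t + p.2))

lemma sigma1_affine_mem_sigma1Span (a b : ℝ) : (fun t => sigma1 (a * t + b)) ∈ sigma1Span :=
  subset_span ⟨(a, b), rfl⟩

lemma one_mem_sigma1Span : (1 : ℝ → ℝ) ∈ sigma1Span := by
  convert sigma1_affine_mem_sigma1Span 0 1 using 2 with t
  rw [zero_mul, zero_add, sigma1_eq_one_of_le (by norm_num), Pi.one_apply]

noncomputable def sigma1Ramp (s s' t : ℝ) : ℝ := sigma1 ((t - s) / (s' - s) - 1 / 2)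

lemma sigma1Ramp_mem_sigma1Span (s s' : ℝ) : sigma1Ramp s s' ∈ sigma1Span := by
  convert sigma1_affine_mem_sigma1Span (s' - s)⁻¹ (-s / (s' - s) - 1 / 2) using 2 with t
  rw [sigma1Ramp]
  ring_nf

lemma sigma1Ramp_eq_zero {s s' t : ℝ} (hs : s < s') (ht : t ≤ s) : sigma1Ramp s s' t = 0 :=
  sigma1_eq_zero_of_le <| by
    rw [sub_le_iff_le_add, div_le_iff₀ (sub_pos.2 hs)]
    linarith

lemma sigma1Ramp_eq_one {s s' t : ℝ} (hs : s < s') (ht : s' ≤ t) : sigma1Ramp s s' t = 1 :=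
  sigma1_eq_one_of_le <| by
    rw [le_sub_iff_add_le, le_div_iff₀ (sub_pos.2 hs)]
    linarith

/-- The piecewise-linear interpolant of `φ` at the nodes `τ 0 < ⋯ < τ N`. -/
noncomputable def sigma1Interp (φ : ℝ → ℝ) (τ : ℕ → ℝ) (N : ℕ) (t : ℝ) : ℝ :=
  φ (τ 0) + ∑ i ∈ range N, (φ (τ (i + 1)) - φ (τ i)) * sigma1Ramp (τ i) (τ (i + 1)) t

lemma sigma1Interp_mem_sigma1Span (φ : ℝ → ℝ) (τ : ℕ → ℝ) (N : ℕ) :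
    sigma1Interp φ τ N ∈ sigma1Span := by
  have : sigma1Interp φ τ N =
      φ (τ 0) • 1 + ∑ i ∈ range N, (φ (τ (i + 1)) - φ (τ i)) • sigma1Ramp (τ i) (τ (i + 1)) := by
    ext t
    simp [sigma1Interp]
  rw [this]
  exact add_mem (smul_mem _ _ one_mem_sigma1Span)
    (sum_mem fun i _ => smul_mem _ _ (sigma1Ramp_mem_sigma1Span _ _))

theorem abs_sigma1Interp_sub_le {φ : ℝ → ℝ} {τ : ℕ → ℝ} (hτ : StrictMono τ) {N k : ℕ}
    (hk : k < N) {t : ℝ} (ht : t ∈ Icc (τ k) (τ (k + 1))) :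
    |sigma1Interp φ τ N t - φ t| ≤ |φ (τ k) - φ t| + |φ (τ (k + 1)) - φ (τ k)| := by
  have hsum := sum_range_sub_mul_eq_of_eq_one_of_eq_zero (fun i => φ (τ i))
    (fun i => sigma1Ramp (τ i) (τ (i + 1)) t) hk
    (fun i hi => sigma1Ramp_eq_one (hτ i.lt_succ_self) ((hτ.monotone hi).trans ht.1))
    (fun i hi => sigma1Ramp_eq_zero (hτ i.lt_succ_self) (ht.2.trans (hτ.monotone hi)))
  rw [sigma1Interp, hsum]
  calc _ = |(φ (τ k) - φ t) + (φ (τ (k + 1)) - φ (τ k)) * sigma1Ramp (τ k) (τ (k + 1)) t| := by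
        ring_nf
    _ ≤ |φ (τ k) - φ t| + |φ (τ (k + 1)) - φ (τ k)| * 1 := by
        grw [abs_add_le, abs_mul, sigma1Ramp, abs_sigma1_le_one]
    _ = _ := by rw [mul_one]

theorem exists_mem_sigma1Span_abs_sub_le {φ : ℝ → ℝ} {a b : ℝ} (hab : a < b)
    (hφ : ContinuousOn φ (Icc a b)) {ε : ℝ} (hε : 0 < ε) :
    ∃ ψ ∈ sigma1Span, ∀ t ∈ Icc a b, |ψ t - φ t| ≤ ε := by
  obtain ⟨δ, hδ, hφδ⟩ := Metric.uniformContinuousOn_iff.1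
    (isCompact_Icc.uniformContinuousOn_of_continuous hφ) (ε / 2) (half_pos hε)
  obtain ⟨N, hN⟩ := exists_nat_gt ((b - a) / δ)
  have hN₀ : (0 : ℝ) < N := (div_pos (sub_pos.2 hab) hδ).trans hN
  set h := (b - a) / N
  have hh : 0 < h := div_pos (sub_pos.2 hab) hN₀
  have hhδ : h < δ := by rwa [div_lt_iff₀ hN₀, ← div_lt_iff₀' hδ]
  set τ : ℕ → ℝ := fun i => a + i * h
  have hτ : StrictMono τ := strictMono_nat_of_lt_succ fun i => by simp only [τ]; push_cast; linarith
  have hτN : τ N = b := by simp only [τ, h]; field_simp; ring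
  have hτ_mem : ∀ i ≤ N, τ i ∈ Icc a b := fun i hi =>
    ⟨by simpa [τ] using hτ.monotone i.zero_le, hτN ▸ hτ.monotone hi⟩
  refine ⟨sigma1Interp φ τ N, sigma1Interp_mem_sigma1Span φ τ N, fun t ht => ?_⟩
  obtain ⟨k, hkN, hk⟩ := exists_lt_mem_Icc_of_mem_Icc (τ := τ) (Nat.cast_pos.1 hN₀)
    (by rw [hτN]; simpa [τ] using ht)
  have hstep : τ (k + 1) - τ k = h := by simp only [τ]; push_cast; ring
  have h₁ : |φ (τ k) - φ t| < ε / 2 := hφδ _ (hτ_mem k hkN.le) _ ht <| by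
    rw [Real.dist_eq, abs_sub_comm, abs_of_nonneg (sub_nonneg.2 hk.1)]
    linarith [hk.2]
  have h₂ : |φ (τ (k + 1)) - φ (τ k)| < ε / 2 := hφδ _ (hτ_mem _ hkN) _ (hτ_mem k hkN.le) <| by
    rw [Real.dist_eq, hstep, abs_of_pos hh]
    exact hhδ
  linarith [abs_sigma1Interp_sub_le (φ := φ) hτ hkN hk]

theorem setIntegral_abs_sub_le_of_forall_abs_sub_le {α : Type*} [MeasurableSpace α]
    {μ : Measure α} {s : Set α} (hs : MeasurableSet s) (hμs : μ s ≠ ⊤) {F g f : α → ℝ}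
    (hF : IntegrableOn F s μ) (hg : IntegrableOn g s μ) (hf : IntegrableOn f s μ) {δ : ℝ}
    (hFg : ∀ x ∈ s, |F x - g x| ≤ δ) :
    ∫ x in s, |F x - f x| ∂μ ≤ δ * μ.real s + ∫ x in s, |g x - f x| ∂μ := by
  have hδ : Integrable (fun _ => δ) (μ.restrict s) := integrableOn_const hμs
  have hgf : IntegrableOn (fun x => |g x - f x|) s μ := (hg.sub hf).abs
  calc ∫ x in s, |F x - f x| ∂μ ≤ ∫ x in s, (δ + |g x - f x|) ∂μ :=
        setIntegral_mono_on (hF.sub hf).abs (hδ.add hgf) hs fun x hx =>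
          (abs_sub_le (F x) (g x) (f x)).trans (add_le_add (hFg x hx) le_rfl)
    _ = δ * μ.real s + ∫ x in s, |g x - f x| ∂μ := by
        rw [integral_add hδ hgf, setIntegral_const, smul_eq_mul, mul_comm]

section Ridge

variable {d : ℕ} (K : Set (Fin d → ℝ))

def ridge (φ : C(ℝ, ℝ)) (w : Fin d → ℝ) (c : ℝ) : C(K, ℝ) :=
  ⟨fun x => φ (∑ k, w k * (x : Fin d → ℝ) k + c), φ.continuous.comp <|
    (continuous_finsetSum _ fun k _ =>
      continuous_const.mul ((continuous_apply k).comp continuous_subtype_val)).add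
      continuous_const⟩

@[simp]
lemma ridge_apply (φ : C(ℝ, ℝ)) (w : Fin d → ℝ) (c : ℝ) (x : K) :
    ridge K φ w c x = φ (∑ k, w k * (x : Fin d → ℝ) k + c) := rfl

def ridgeSpan (φ : C(ℝ, ℝ)) : Submodule ℝ C(K, ℝ) :=
  span ℝ (range fun p : (Fin d → ℝ) × ℝ => ridge K φ p.1 p.2)

lemma ridge_mem_ridgeSpan (φ : C(ℝ, ℝ)) (w : Fin d → ℝ) (c : ℝ) : ridge K φ w c ∈ ridgeSpan K φ :=
  subset_span ⟨(w, c), rfl⟩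

lemma ridge_exp_mul (w w' : Fin d → ℝ) (c c' : ℝ) :
    ridge K ⟨Real.exp, Real.continuous_exp⟩ w c * ridge K ⟨Real.exp, Real.continuous_exp⟩ w' c' =
      ridge K ⟨Real.exp, Real.continuous_exp⟩ (w + w') (c + c') := by
  ext x
  simp only [ContinuousMap.mul_apply, ridge_apply, ContinuousMap.coe_mk, ← Real.exp_add,
    Pi.add_apply, add_mul, sum_add_distrib]
  ring_nf

theorem dense_ridgeSpan_exp [CompactSpace K] :
    Dense (ridgeSpan K ⟨Real.exp, Real.continuous_exp⟩ : Set C(K, ℝ)) := by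
  set E := ridgeSpan K ⟨Real.exp, Real.continuous_exp⟩
  have h_one : 1 ∈ E := by
    convert ridge_mem_ridgeSpan K _ 0 0
    ext x
    simp
  have h_mul : ∀ F G, F ∈ E → G ∈ E → F * G ∈ E := fun F G hF hG => by
    refine (show E * E ≤ E from ?_) (mul_mem_mul hF hG)
    dsimp only [E, ridgeSpan]
    rw [span_mul_span, span_le]
    rintro _ ⟨_, ⟨⟨w, c⟩, rfl⟩, _, ⟨⟨w', c'⟩, rfl⟩, rfl⟩
    dsimp only
    rw [ridge_exp_mul]
    exact ridge_mem_ridgeSpan K _ _ _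
  have h_sep : (E.toSubalgebra h_one h_mul).SeparatesPoints := fun x y hxy => by
    obtain ⟨k, hk⟩ := Function.ne_iff.1 (Subtype.coe_ne_coe.2 hxy)
    refine ⟨_, ⟨ridge K _ (Pi.single k 1) 0, ridge_mem_ridgeSpan K _ _ _, rfl⟩, ?_⟩
    simpa [Pi.single_apply] using hk
  exact dense_iff_closure_eq.2 <| congrArg SetLike.coe
    (ContinuousMap.subalgebra_topologicalClosure_eq_top_of_separatesPoints _ h_sep)

theorem exists_mem_ridgeSpan_sigma1_eq_comp {ψ : ℝ → ℝ} (hψ : ψ ∈ sigma1Span) (w : Fin d → ℝ)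
    (c : ℝ) : ∃ F ∈ ridgeSpan K ⟨sigma1, continuous_sigma1⟩,
      ∀ x : K, F x = ψ (∑ k, w k * (x : Fin d → ℝ) k + c) := by
  induction hψ using Submodule.span_induction with
  | mem _ hψ =>
    obtain ⟨⟨a, b⟩, rfl⟩ := hψ
    refine ⟨ridge K _ (a • w) (a * c + b), ridge_mem_ridgeSpan K _ _ _, fun x => ?_⟩
    simp only [ridge_apply, ContinuousMap.coe_mk, Pi.smul_apply, smul_eq_mul, mul_add, mul_sum,
      mul_assoc, add_assoc]
  | zero => exact ⟨0, zero_mem _, fun x => rfl⟩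
  | add ψ₁ ψ₂ _ _ h₁ h₂ =>
    obtain ⟨F₁, hF₁, e₁⟩ := h₁
    obtain ⟨F₂, hF₂, e₂⟩ := h₂
    exact ⟨F₁ + F₂, add_mem hF₁ hF₂, fun x => by simp [e₁, e₂]⟩
  | smul a ψ _ h =>
    obtain ⟨F, hF, e⟩ := h
    exact ⟨a • F, smul_mem _ a hF, fun x => by simp [e]⟩

theorem ridge_mem_closure_ridgeSpan_sigma1 [CompactSpace K] (φ : C(ℝ, ℝ)) (w : Fin d → ℝ)
    (c : ℝ) : ridge K φ w c ∈ closure (ridgeSpan K ⟨sigma1, continuous_sigma1⟩ : Set C(K, ℝ)) := by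
  set R := ‖ridge K (ContinuousMap.id ℝ) w c‖
  have hR : ∀ x : K, ∑ k, w k * (x : Fin d → ℝ) k + c ∈ Icc (-R - 1) (R + 1) := fun x => by
    have := abs_le.1 (ContinuousMap.norm_coe_le_norm (ridge K (ContinuousMap.id ℝ) w c) x)
    simp only [ridge_apply, ContinuousMap.id_apply] at this
    constructor <;> linarith [this.1, this.2]
  rw [Metric.mem_closure_iff]
  intro ε hε
  obtain ⟨ψ, hψ, hψφ⟩ := exists_mem_sigma1Span_abs_sub_le
    (by linarith [norm_nonneg (ridge K (ContinuousMap.id ℝ) w c)] : -R - 1 < R + 1)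
    φ.continuous.continuousOn (half_pos hε)
  obtain ⟨F, hF, hFψ⟩ := exists_mem_ridgeSpan_sigma1_eq_comp K hψ w c
  refine ⟨F, hF, (ContinuousMap.dist_lt_iff hε).2 fun x => ?_⟩
  rw [Real.dist_eq, hFψ, abs_sub_comm, ridge_apply]
  exact (hψφ _ (hR x)).trans_lt (half_lt_self hε)

theorem dense_ridgeSpan_sigma1 [CompactSpace K] :
    Dense (ridgeSpan K ⟨sigma1, continuous_sigma1⟩ : Set C(K, ℝ)) := by
  refine dense_closure.1 ((dense_ridgeSpan_exp K).mono ?_)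
  rw [← Submodule.topologicalClosure_coe]
  exact span_le.2 <| by
    rintro _ ⟨⟨w, c⟩, rfl⟩
    exact ridge_mem_closure_ridgeSpan_sigma1 K _ w c

theorem exists_sum_eq_of_mem_ridgeSpan {φ : C(ℝ, ℝ)} {F : C(K, ℝ)} (hF : F ∈ ridgeSpan K φ) :
    ∃ (n : ℕ) (α : Fin n → ℝ) (w : Fin n → Fin d → ℝ) (b : Fin n → ℝ),
      ∀ x : K, F x = ∑ j, α j * φ (∑ k, w j k * (x : Fin d → ℝ) k + b j) := by
  obtain ⟨n, α, g, rfl⟩ := mem_span_set'.1 hF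
  choose p hp using fun j => (g j).2
  refine ⟨n, α, fun j => (p j).1, fun j => (p j).2, fun x => ?_⟩
  simp [ContinuousMap.sum_apply, ← hp]

variable {K}

theorem exists_sigma1_sum_abs_sub_lt (hK : IsCompact K) {g : (Fin d → ℝ) → ℝ}
    (hg : ContinuousOn g K) {δ : ℝ} (hδ : 0 < δ) :
    ∃ (n : ℕ) (α : Fin n → ℝ) (w : Fin n → Fin d → ℝ) (b : Fin n → ℝ),
      ∀ x ∈ K, |∑ j, α j * sigma1 (∑ k, w j k * x k + b j) - g x| < δ := by
  have := isCompact_iff_compactSpace.1 hK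
  obtain ⟨F, hFg, hF⟩ :=
    Metric.dense_iff.1 (dense_ridgeSpan_sigma1 K) ⟨K.domRestrict g, hg.domRestrict⟩ δ hδ
  obtain ⟨n, α, w, b, hsum⟩ := exists_sum_eq_of_mem_ridgeSpan K hF
  refine ⟨n, α, w, b, fun x hx => ?_⟩
  have := (ContinuousMap.dist_lt_iff hδ).1 (Metric.mem_ball.1 hFg) ⟨x, hx⟩
  rwa [Real.dist_eq, hsum] at this

theorem exists_sigma1_sum_integral_abs_sub_lt (hK : IsCompact K) {f : (Fin d → ℝ) → ℝ}
    (hf : IntegrableOn f K) {ε : ℝ} (hε : 0 < ε) :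
    ∃ (n : ℕ) (α : Fin n → ℝ) (w : Fin n → Fin d → ℝ) (b : Fin n → ℝ),
      ∫ x in K, |∑ j, α j * sigma1 (∑ k, w j k * x k + b j) - f x| < ε := by
  have hf' := (integrable_indicator_iff hK.measurableSet).2 hf
  obtain ⟨g, -, hfg, hg, hg'⟩ := hf'.exists_hasCompactSupport_integral_sub_le (half_pos hε)
  have hgf : ∫ x in K, |g x - f x| ≤ ε / 2 := calc
    ∫ x in K, |g x - f x| = ∫ x in K, ‖K.indicator f x - g x‖ :=
      setIntegral_congr_fun hK.measurableSet fun x hx => by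
        rw [indicator_of_mem hx, Real.norm_eq_abs, abs_sub_comm]
    _ ≤ ∫ x, ‖K.indicator f x - g x‖ :=
      setIntegral_le_integral (hf'.sub hg').norm (.of_forall fun _ => norm_nonneg _)
    _ ≤ ε / 2 := hfg
  set V := volume.real K
  set δ := ε / 2 / (V + 1)
  have hδV : δ * V < ε / 2 := by
    rw [div_mul_eq_mul_div, div_lt_iff₀ (by positivity)]
    nlinarith
  obtain ⟨n, α, w, b, hN⟩ := exists_sigma1_sum_abs_sub_lt hK hg.continuousOn
    (show 0 < δ by positivity)
  refine ⟨n, α, w, b, ?_⟩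
  calc _ ≤ δ * V + ∫ x in K, |g x - f x| :=
        setIntegral_abs_sub_le_of_forall_abs_sub_le hK.measurableSet hK.measure_lt_top.ne
          ((by fun_prop : Continuous _).continuousOn.integrableOn_compact hK) hg'.integrableOn hf
          fun x hx => (hN x hx).le
    _ < ε := by linarith

end Ridge

theorem sigma1_network_dense_L1_general
    (d : ℕ) (f : (Fin d → ℝ) → ℝ)
    (hf : IntegrableOn f (Set.Icc (0 : Fin d → ℝ) 1)) (ε : ℝ) (hε : 0 < ε) :
    ∃ (n : ℕ), 1 ≤ n ∧ ∃ (α : Fin n → ℝ) (w : Fin n → Fin d → ℝ) (b : Fin n → ℝ),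
      ∫ x in Set.Icc (0 : Fin d → ℝ) 1,
        |(∑ j, α j * sigma1 (∑ k, w j k * x k + b j)) - f x| < ε := by
  obtain ⟨n, α, w, b, h⟩ := exists_sigma1_sum_integral_abs_sub_lt isCompact_Icc hf hε
  refine ⟨n + 1, by omega, Fin.cons 0 α, Fin.cons 0 w, Fin.cons 0 b, ?_⟩
  simpa [Fin.sum_univ_succ] using h

/-- **Superpositions of the clipped-linear activation `σ₁` are dense in `L¹(I_d)`.**
For every `d ≥ 1`, every `f ∈ L¹(I_d)` and every `ε > 0`, there exist `n ≥ 1`,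
coefficients `α`, weight vectors `w` and biases `b` such that
`∫_{I_d} |∑ j, α j * σ₁ (⟪w j, x⟫ + b j) - f x| dx < ε`. -/
theorem sigma1_network_dense_L1
    (d : ℕ) (hd : 1 ≤ d) (f : (Fin d → ℝ) → ℝ)
    (hf : IntegrableOn f (Set.Icc (0 : Fin d → ℝ) 1)) (ε : ℝ) (hε : 0 < ε) :
    ∃ (n : ℕ), 1 ≤ n ∧ ∃ (α : Fin n → ℝ) (w : Fin n → Fin d → ℝ) (b : Fin n → ℝ),
      ∫ x in Set.Icc (0 : Fin d → ℝ) 1,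
        |(∑ j, α j * sigma1 (∑ k, w j k * x k + b j)) - f x| < ε :=
  sigma1_network_dense_L1_general d f hf ε hε
end
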